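/- Along any edge of the dual graph of the regular triangular tiling, the coordinate sums of the cubulation images of the two endpoint triangles are 0 and 1 (in some order); i.e., each edge connects a vertex with coordinate sum 0 to a vertex with coordinate sum 1. -/

import Mathlib

/-! The three line functions sum to `-1`. On the region of `v` their upper bounds therefore sum
to `sumv v` and their lower bounds to `sumv v - 3`, and the region is a single point when either
bound is attained everywhere, i.e. when `sumv v = -1` or `sumv v = 2`; so a tile has
`sumv v ∈ {0, 1}`. Two distinct tiles with equal sums differ in at least two coordinates, and
each differing coordinate pins a line function on the common part of their regions; two pinned
line functions leave at most one point, so such tiles are not edge-adjacent. -/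

noncomputable def lineF : Fin 3 → ℝ × ℝ → ℝ := fun i p =>
  if i = 0 then p.2 - 1/3
  else if i = 1 then (Real.sqrt 3 * p.1 - p.2) / 2 - 1/3
  else -(Real.sqrt 3 * p.1 + p.2) / 2 - 1/3

def triRegion (v : Fin 3 → ℤ) : Set (ℝ × ℝ) :=
  {p | ∀ i : Fin 3, ((v i : ℝ) - 1 ≤ lineF i p ∧ lineF i p ≤ (v i : ℝ))}

def IsTile (v : Fin 3 → ℤ) : Prop := (interior (triRegion v)).Nonempty

abbrev Tile : Type := {v : Fin 3 → ℤ // IsTile v}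

def Tile.region (T : Tile) : Set (ℝ × ℝ) := triRegion T.val

def EdgeAdj (T U : Tile) : Prop := T ≠ U ∧ ¬ (T.region ∩ U.region).Subsingleton

def VertexAdj (T U : Tile) : Prop := T ≠ U ∧ (T.region ∩ U.region).Nonempty

def sumv (v : Fin 3 → ℤ) : ℤ := v 0 + v 1 + v 2

def dualGraph : SimpleGraph Tile where
  Adj := EdgeAdj
  symm := ⟨fun T U h => ⟨h.1.symm, fun hs => h.2 (by rwa [Set.inter_comm] at hs)⟩⟩
  loopless := ⟨fun T h => h.1 rfl⟩

lemma lineF_sum (p : ℝ × ℝ) : lineF 0 p + lineF 1 p + lineF 2 p = -1 := by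
  simp only [lineF, Fin.isValue, if_true, one_ne_zero, if_false, Fin.reduceEq]; ring

lemma eq_of_lineF_eq {i j : Fin 3} (hij : i ≠ j) {p q : ℝ × ℝ}
    (hi : lineF i p = lineF i q) (hj : lineF j p = lineF j q) : p = q := by
  have hp := lineF_sum p
  have hq := lineF_sum q
  have h01 : lineF 0 p = lineF 0 q ∧ lineF 1 p = lineF 1 q := by
    fin_cases i <;> fin_cases j <;>
      simp only [Fin.zero_eta, Fin.mk_one, Fin.reduceFinMk, ne_eq, not_true_eq_false]
        at hij hi hj ⊢ <;>
      constructor <;> linarith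
  have hy : p.2 = q.2 := by simpa [lineF] using h01.1
  have hx : Real.sqrt 3 * p.1 = Real.sqrt 3 * q.1 := by
    have h1 := h01.2
    simp only [lineF, Fin.isValue, one_ne_zero, if_false, if_true] at h1
    linarith
  exact Prod.ext (mul_left_cancel₀ (by positivity) hx) hy

lemma subsingleton_of_lineF_const {S : Set (ℝ × ℝ)} {i j : Fin 3} (hij : i ≠ j) {a b : ℝ}
    (hi : ∀ p ∈ S, lineF i p = a) (hj : ∀ p ∈ S, lineF j p = b) : S.Subsingleton :=
  fun p hp q hq => eq_of_lineF_eq hij ((hi p hp).trans (hi q hq).symm)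
    ((hj p hp).trans (hj q hq).symm)

lemma IsTile.not_subsingleton {v : Fin 3 → ℤ} (hv : IsTile v) : ¬ (triRegion v).Subsingleton := by
  intro hs
  obtain ⟨p, hp⟩ := hv
  have hsub : interior (triRegion v) ⊆ interior {p} :=
    interior_mono fun q hq => hs hq (interior_subset hp)
  simpa [interior_singleton] using hsub hp

lemma IsTile.sumv_eq_zero_or_one {v : Fin 3 → ℤ} (hv : IsTile v) : sumv v = 0 ∨ sumv v = 1 := by
  obtain ⟨p, hp⟩ := hv.mono interior_subset
  have hsum := lineF_sum p
  have hlow : (-1 : ℝ) ≤ sumv v := by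
    simp only [sumv]; push_cast; linarith [(hp 0).2, (hp 1).2, (hp 2).2]
  have hhigh : (sumv v : ℝ) ≤ 2 := by
    simp only [sumv]; push_cast; linarith [(hp 0).1, (hp 1).1, (hp 2).1]
  have hne_low : sumv v ≠ -1 := by
    intro hs
    have hs' : (v 0 : ℝ) + v 1 + v 2 = -1 := by exact_mod_cast hs
    refine hv.not_subsingleton (subsingleton_of_lineF_const (i := 0) (j := 1) (by decide)
      (a := v 0) (b := v 1) ?_ ?_) <;>
    · intro q hq
      linarith [lineF_sum q, (hq 0).2, (hq 1).2, (hq 2).2]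
  have hne_high : sumv v ≠ 2 := by
    intro hs
    have hs' : (v 0 : ℝ) + v 1 + v 2 = 2 := by exact_mod_cast hs
    refine hv.not_subsingleton (subsingleton_of_lineF_const (i := 0) (j := 1) (by decide)
      (a := v 0 - 1) (b := v 1 - 1) ?_ ?_) <;>
    · intro q hq
      linarith [lineF_sum q, (hq 0).1, (hq 1).1, (hq 2).1]
  have hlow' : -1 ≤ sumv v := by exact_mod_cast hlow
  have hhigh' : sumv v ≤ 2 := by exact_mod_cast hhigh
  omega

lemma lineF_eq_min_of_mem_inter {v w : Fin 3 → ℤ} {k : Fin 3} (hk : v k ≠ w k) {p : ℝ × ℝ}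
    (hp : p ∈ triRegion v ∩ triRegion w) : lineF k p = min (v k : ℝ) (w k) := by
  obtain ⟨hpv, hpw⟩ := hp
  rcases hk.lt_or_gt with hlt | hlt
  · have hlt' : (v k : ℝ) + 1 ≤ w k := by exact_mod_cast hlt
    rw [min_eq_left (by linarith)]
    linarith [(hpv k).2, (hpw k).1]
  · have hlt' : (w k : ℝ) + 1 ≤ v k := by exact_mod_cast hlt
    rw [min_eq_right (by linarith)]
    linarith [(hpw k).2, (hpv k).1]

lemma sumv_eq_sum (v : Fin 3 → ℤ) : sumv v = ∑ i, v i := (Fin.sum_univ_three v).symm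

lemma exists_ne_ne_of_sum_eq {ι M : Type*} [Fintype ι] [AddCommGroup M] {v w : ι → M}
    (hvw : v ≠ w) (hs : ∑ i, v i = ∑ i, w i) : ∃ i j, i ≠ j ∧ v i ≠ w i ∧ v j ≠ w j := by
  obtain ⟨i, hi⟩ := Function.ne_iff.1 hvw
  by_contra! h
  have hsingle : ∑ j, (v j - w j) = v i - w i :=
    Finset.sum_eq_single i (fun j _ hj => sub_eq_zero.2 (h i j hj.symm hi)) (by simp)
  rw [Finset.sum_sub_distrib, hs, sub_self] at hsingle
  exact hi (sub_eq_zero.1 hsingle.symm)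

theorem coordinate_sums_alternate (T U : Tile) (h : EdgeAdj T U) :
    (sumv T.val = 0 ∧ sumv U.val = 1) ∨ (sumv T.val = 1 ∧ sumv U.val = 0) := by
  obtain ⟨hne, hinter⟩ := h
  have hT := T.2.sumv_eq_zero_or_one
  have hU := U.2.sumv_eq_zero_or_one
  suffices hs : sumv T.val ≠ sumv U.val by omega
  intro hs
  obtain ⟨i, j, hij, hi, hj⟩ := exists_ne_ne_of_sum_eq (Subtype.val_injective.ne hne)
    (by rwa [sumv_eq_sum, sumv_eq_sum] at hs)
  exact hinter (subsingleton_of_lineF_const hij (fun p hp => lineF_eq_min_of_mem_inter hi hp)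
    (fun p hp => lineF_eq_min_of_mem_inter hj hp))
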